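/- arXiv:1604.00582 — 4 statements merged into one kernel-verified Lean document; each statement's English description precedes it below -/
import Mathlib

section
/- In the 2-user MIMO interference channel DoF formula d₂ = min⁺{A, B, C} with A = min(max(M₁,N₂), max(M₂,N₁), M₁+M₂, N₁+N₂) − min(M₁,N₁), B = min⁺(N₁−M₁, M₂) + min(M₁,N₂) − min(M₁,N₁) + β₁₂·min⁺(N₂−M₁, M₂) + β₂₁·min⁺(M₁−N₂, N₁), C = min⁺(N₁−M₁, M₂) + β₁₂·min⁺(M₂−N₁, N₂), if β₁₂ = β₂₁ = 1 then min⁺{A,B,C} = A; i.e., with perfect CSIT the formula reduces to the perfect-CSIT DoF value A. -/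
noncomputable def minp (x y : ℝ) : ℝ := max (min x y) 0

noncomputable def Aval (M1 M2 N1 N2 : ℝ) : ℝ :=
  min (min (max M1 N2) (max M2 N1)) (min (M1 + M2) (N1 + N2)) - min M1 N1

noncomputable def Bval (M1 M2 N1 N2 β12 β21 : ℝ) : ℝ :=
  minp (N1 - M1) M2 + min M1 N2 - min M1 N1 + β12 * minp (N2 - M1) M2
    + β21 * minp (M1 - N2) N1

noncomputable def Cval (M1 M2 N1 N2 β12 : ℝ) : ℝ :=
  minp (N1 - M1) M2 + β12 * minp (M2 - N1) N2

noncomputable def dof (M1 M2 N1 N2 β12 β21 : ℝ) : ℝ :=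
  max (min (Aval M1 M2 N1 N2) (min (Bval M1 M2 N1 N2 β12 β21) (Cval M1 M2 N1 N2 β12))) 0

set_option maxHeartbeats 2000000 in
theorem perfect_csit_reduces_to_A (M1 M2 N1 N2 : ℕ)
    (hM1 : 0 < M1) (hM2 : 0 < M2) (hN1 : 0 < N1) (hN2 : 0 < N2)
    (β12 β21 : ℝ) (h12 : β12 = 1) (h21 : β21 = 1) :
    dof (M1 : ℝ) (M2 : ℝ) (N1 : ℝ) (N2 : ℝ) β12 β21
      = Aval (M1 : ℝ) (M2 : ℝ) (N1 : ℝ) (N2 : ℝ) := by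
  subst h12 h21
  simp only [dof, Aval, Bval, Cval, minp, one_mul]
  have e1 : ((M1:ℝ)) = ((M1:ℤ):ℝ) := by push_cast; ring
  have e2 : ((M2:ℝ)) = ((M2:ℤ):ℝ) := by push_cast; ring
  have e3 : ((N1:ℝ)) = ((N1:ℤ):ℝ) := by push_cast; ring
  have e4 : ((N2:ℝ)) = ((N2:ℤ):ℝ) := by push_cast; ring
  rw [e1, e2, e3, e4, show (0:ℝ) = ((0:ℤ):ℝ) from by norm_num]
  simp only [← Int.cast_min, ← Int.cast_max, ← Int.cast_sub, ← Int.cast_add, Int.cast_inj]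
  omega
end

section
/- In Case 1 of Theorem 1 (M₂ ≤ N₂, M₂ > N₁, N₁ ≤ N₂), the general formula d₂ = min⁺{A,B,C} simplifies to d₂ = (N₁−M₁)⁺ + β₁₂·(M₂−N₁). -/
theorem case1_formula (M1 M2 N1 N2 : ℕ)
    (hM1 : 0 < M1) (hM2 : 0 < M2) (hN1 : 0 < N1) (hN2 : 0 < N2)
    (h1 : N1 < M2) (h2 : M2 ≤ N2)
    (β12 β21 : ℝ) (hβ12 : β12 ∈ Set.Icc (0 : ℝ) 1) (hβ21 : β21 ∈ Set.Icc (0 : ℝ) 1) :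
    dof (M1 : ℝ) (M2 : ℝ) (N1 : ℝ) (N2 : ℝ) β12 β21
      = max ((N1 : ℝ) - M1) 0 + β12 * ((M2 : ℝ) - N1) := by
  obtain ⟨hb0, hb1⟩ := hβ12
  obtain ⟨hc0, hc1⟩ := hβ21
  have hm1 : (0:ℝ) ≤ (M1:ℝ) := Nat.cast_nonneg _
  have hn1 : (0:ℝ) < (N1:ℝ) := by exact_mod_cast hN1
  have hn2 : (0:ℝ) < (N2:ℝ) := by exact_mod_cast hN2
  have h1' : ((N1:ℕ):ℝ) < (M2:ℝ) := by exact_mod_cast h1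
  have h2' : ((M2:ℕ):ℝ) ≤ (N2:ℝ) := by exact_mod_cast h2
  -- C equals the claimed formula
  have hCval : Cval (M1:ℝ) M2 N1 N2 β12 = max ((N1:ℝ) - M1) 0 + β12 * ((M2:ℝ) - N1) := by
    unfold Cval minp
    rw [min_eq_left (by linarith : (N1:ℝ) - M1 ≤ M2),
        min_eq_left (by linarith : (M2:ℝ) - N1 ≤ N2),
        max_eq_left (by linarith : (0:ℝ) ≤ (M2:ℝ) - N1)]
  -- A simplifies
  have hA : Aval (M1:ℝ) M2 N1 N2 = (M2:ℝ) - min (M1:ℝ) N1 := by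
    unfold Aval
    rw [max_eq_left h1'.le,
        min_eq_right (le_trans h2' (le_max_right (M1:ℝ) N2)),
        min_eq_left (le_min (by linarith) (by linarith))]
  -- C ≤ A
  have hCA : Cval (M1:ℝ) M2 N1 N2 β12 ≤ Aval (M1:ℝ) M2 N1 N2 := by
    rw [hCval, hA]
    have key : β12 * ((M2:ℝ) - N1) ≤ (M2:ℝ) - N1 :=
      mul_le_of_le_one_left (by linarith) hb1
    rcases le_total (M1:ℝ) N1 with h | h
    · rw [max_eq_left (by linarith), min_eq_left h]; linarith
    · rw [max_eq_right (by linarith), min_eq_right h]; linarith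
  -- C ≤ B
  have hCB : Cval (M1:ℝ) M2 N1 N2 β12 ≤ Bval (M1:ℝ) M2 N1 N2 β12 β21 := by
    unfold Cval Bval minp
    have hs : 0 ≤ β21 * max (min ((M1:ℝ) - N2) N1) 0 :=
      mul_nonneg hc0 (le_max_right _ _)
    have ht0 : (0:ℝ) ≤ max (min ((N2:ℝ) - M1) M2) 0 := le_max_right _ _
    rw [min_eq_left (by linarith : (M2:ℝ) - N1 ≤ N2),
        max_eq_left (by linarith : (0:ℝ) ≤ (M2:ℝ) - N1)]
    rcases le_total (M1:ℝ) N1 with h | h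
    · -- M1 ≤ N1 ≤ N2
      have h' : (M1:ℝ) ≤ N2 := by linarith
      rw [min_eq_left h, min_eq_left h']
      have ht : (M2:ℝ) - N1 ≤ max (min ((N2:ℝ) - M1) M2) 0 :=
        le_trans (le_min (by linarith) (by linarith)) (le_max_left _ _)
      have := mul_le_mul_of_nonneg_left ht hb0
      linarith
    · rw [min_eq_right h]
      rcases le_total (M1:ℝ) N2 with h' | h'
      · -- N1 ≤ M1 ≤ N2
        rw [min_eq_left h']
        have ht : (M2:ℝ) - M1 ≤ max (min ((N2:ℝ) - M1) M2) 0 :=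
          le_trans (le_min (by linarith) (by linarith)) (le_max_left _ _)
        have h3 := mul_le_mul_of_nonneg_left ht hb0
        have h4 : β12 * ((M1:ℝ) - N1) ≤ (M1:ℝ) - N1 :=
          mul_le_of_le_one_left (by linarith) hb1
        nlinarith
      · -- N2 ≤ M1
        rw [min_eq_right h']
        have key : β12 * ((M2:ℝ) - N1) ≤ (M2:ℝ) - N1 :=
          mul_le_of_le_one_left (by linarith) hb1
        have h5 := mul_nonneg hb0 ht0
        linarith
  -- C ≥ 0
  have hC0 : 0 ≤ Cval (M1:ℝ) M2 N1 N2 β12 := by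
    rw [hCval]
    have := mul_nonneg hb0 (by linarith : (0:ℝ) ≤ (M2:ℝ) - N1)
    have := le_max_right ((N1:ℝ) - M1) 0
    linarith
  unfold dof
  rw [min_eq_right hCB, min_eq_right hCA, max_eq_left hC0, hCval]
end

section
/- In Case 2 of Theorem 1 (M₁ < N₁ ≤ N₂ < M₂), min⁺{A,B,C} = min(N₂ − M₁, N₁ − M₁ + β₁₂·min(M₂−N₁, N₂−M₁)). -/
/-! In Case 2 every clipped minimum `min⁺` in `A`, `B`, `C` resolves to one of its arguments or to
`0`: `A = N₂ - M₁`, while `B` and `C` share the summand `N₁ - M₁` and differ only in the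
`β₁₂`-weighted term, so `min B C` collects the two weighted terms into one minimum. The result
is nonnegative, so the outer clipping at `0` disappears. -/

lemma minp_eq_min {x y : ℝ} (h : 0 ≤ min x y) : minp x y = min x y :=
  max_eq_left h

lemma minp_eq_left {x y : ℝ} (hx : 0 ≤ x) (hxy : x ≤ y) : minp x y = x := by
  rw [minp_eq_min (le_min hx (hx.trans hxy)), min_eq_left hxy]

lemma minp_eq_zero_of_nonpos {x : ℝ} (y : ℝ) (hx : x ≤ 0) : minp x y = 0 :=
  max_eq_right ((min_le_left x y).trans hx)

section Case2

variable {M1 M2 N1 N2 : ℝ}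

lemma Aval_eq_of_le (hM1 : 0 ≤ M1) (h1 : M1 ≤ N1) (h2 : N1 ≤ N2) (h3 : N2 ≤ M2) :
    Aval M1 M2 N1 N2 = N2 - M1 := by
  have hmax : min (max M1 N2) (max M2 N1) = N2 := by
    rw [max_eq_right (h1.trans h2), max_eq_left (h2.trans h3), min_eq_left h3]
  have hsum : N2 ≤ min (M1 + M2) (N1 + N2) := le_min (by linarith) (by linarith)
  rw [Aval, hmax, min_eq_left hsum, min_eq_left h1]

lemma Bval_eq_of_le (β12 β21 : ℝ) (hM1 : 0 ≤ M1) (h1 : M1 ≤ N1) (h2 : N1 ≤ N2)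
    (h3 : N2 ≤ M2) :
    Bval M1 M2 N1 N2 β12 β21 = N1 - M1 + β12 * (N2 - M1) := by
  rw [Bval, minp_eq_left (by linarith) (by linarith), minp_eq_left (by linarith) (by linarith),
    minp_eq_zero_of_nonpos N1 (by linarith), min_eq_left (h1.trans h2),
    min_eq_left h1]
  ring

lemma Cval_eq_of_le (β12 : ℝ) (hM1 : 0 ≤ M1) (h1 : M1 ≤ N1) (h2 : N1 ≤ N2) (h3 : N2 ≤ M2) :
    Cval M1 M2 N1 N2 β12 = N1 - M1 + β12 * min (M2 - N1) N2 := by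
  rw [Cval, minp_eq_left (by linarith) (by linarith),
    minp_eq_min (le_min (by linarith) (by linarith))]

lemma min_Bval_Cval_eq_of_le {β12 : ℝ} (β21 : ℝ) (hβ12 : 0 ≤ β12) (hM1 : 0 ≤ M1)
    (h1 : M1 ≤ N1) (h2 : N1 ≤ N2) (h3 : N2 ≤ M2) :
    min (Bval M1 M2 N1 N2 β12 β21) (Cval M1 M2 N1 N2 β12)
      = N1 - M1 + β12 * min (M2 - N1) (N2 - M1) := by
  have hcap : min (N2 - M1) (min (M2 - N1) N2) = min (M2 - N1) (N2 - M1) := by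
    rw [← min_assoc, min_comm (N2 - M1), min_assoc, min_eq_left (by linarith : N2 - M1 ≤ N2)]
  rw [Bval_eq_of_le β12 β21 hM1 h1 h2 h3, Cval_eq_of_le β12 hM1 h1 h2 h3, min_add_add_left,
    ← mul_min_of_nonneg _ _ hβ12, hcap]

lemma dof_eq_of_le {β12 : ℝ} (β21 : ℝ) (hβ12 : 0 ≤ β12) (hM1 : 0 ≤ M1) (h1 : M1 ≤ N1)
    (h2 : N1 ≤ N2) (h3 : N2 ≤ M2) :
    dof M1 M2 N1 N2 β12 β21 = min (N2 - M1) (N1 - M1 + β12 * min (M2 - N1) (N2 - M1)) := by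
  have hnonneg : 0 ≤ min (N2 - M1) (N1 - M1 + β12 * min (M2 - N1) (N2 - M1)) :=
    le_min (by linarith)
      (add_nonneg (by linarith) (mul_nonneg hβ12 (le_min (by linarith) (by linarith))))
  rw [dof, Aval_eq_of_le hM1 h1 h2 h3, min_Bval_Cval_eq_of_le β21 hβ12 hM1 h1 h2 h3,
    max_eq_left hnonneg]

end Case2

theorem case2_formula_general (M1 M2 N1 N2 : ℕ)
    (h1 : M1 < N1) (h2 : N1 ≤ N2) (h3 : N2 < M2)
    (β12 β21 : ℝ) (hβ12 : β12 ∈ Set.Icc (0 : ℝ) 1) :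
    dof (M1 : ℝ) (M2 : ℝ) (N1 : ℝ) (N2 : ℝ) β12 β21
      = min ((N2 : ℝ) - M1)
          ((N1 : ℝ) - M1 + β12 * min ((M2 : ℝ) - N1) ((N2 : ℝ) - M1)) :=
  dof_eq_of_le β21 hβ12.1 M1.cast_nonneg (by exact_mod_cast h1.le) (by exact_mod_cast h2)
    (by exact_mod_cast h3.le)

theorem case2_formula (M1 M2 N1 N2 : ℕ)
    (hM1 : 0 < M1) (hM2 : 0 < M2) (hN1 : 0 < N1) (hN2 : 0 < N2)
    (h1 : M1 < N1) (h2 : N1 ≤ N2) (h3 : N2 < M2)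
    (β12 β21 : ℝ) (hβ12 : β12 ∈ Set.Icc (0 : ℝ) 1) (hβ21 : β21 ∈ Set.Icc (0 : ℝ) 1) :
    dof (M1 : ℝ) (M2 : ℝ) (N1 : ℝ) (N2 : ℝ) β12 β21
      = min ((N2 : ℝ) - M1)
          ((N1 : ℝ) - M1 + β12 * min ((M2 : ℝ) - N1) ((N2 : ℝ) - M1)) :=
  case2_formula_general M1 M2 N1 N2 h1 h2 h3 β12 β21 hβ12
end

section
/- In Case 4 of Theorem 1 (N₁ ≤ N₂ < min(M₁, M₂)), min⁺{A,B,C} = min(β₁₂·min(M₂−N₁, N₂), N₂ − N₁ + β₂₁·min(M₁−N₂, N₁)). -/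
theorem case4_formula (M1 M2 N1 N2 : ℕ)
    (hM1 : 0 < M1) (hM2 : 0 < M2) (hN1 : 0 < N1) (hN2 : 0 < N2)
    (h1 : N1 ≤ N2) (h2 : N2 < M1) (h3 : N2 < M2)
    (β12 β21 : ℝ) (hβ12 : β12 ∈ Set.Icc (0 : ℝ) 1) (hβ21 : β21 ∈ Set.Icc (0 : ℝ) 1) :
    dof (M1 : ℝ) (M2 : ℝ) (N1 : ℝ) (N2 : ℝ) β12 β21
      = min (β12 * min ((M2 : ℝ) - N1) (N2 : ℝ))
          ((N2 : ℝ) - N1 + β21 * min ((M1 : ℝ) - N2) (N1 : ℝ)) := by 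
  obtain ⟨hb12a, hb12b⟩ := hβ12
  obtain ⟨hb21a, hb21b⟩ := hβ21
  have c1 : (N1:ℝ) ≤ N2 := by exact_mod_cast h1
  have c2 : (N2:ℝ) < M1 := by exact_mod_cast h2
  have c3 : (N2:ℝ) < M2 := by exact_mod_cast h3
  have c4 : (0:ℝ) < N1 := by exact_mod_cast hN1
  unfold dof Aval Bval Cval minp
  rw [show max (min ((N1:ℝ) - M1) M2) 0 = 0 from max_eq_right (le_trans (min_le_left _ _) (by linarith)),
      show max (min ((N2:ℝ) - M1) M2) 0 = 0 from max_eq_right (le_trans (min_le_left _ _) (by linarith)),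
      show max (min ((M1:ℝ) - N2) N1) 0 = min ((M1:ℝ)-N2) N1 from max_eq_left (le_min (by linarith) (by linarith)),
      show max (min ((M2:ℝ) - N1) N2) 0 = min ((M2:ℝ)-N1) N2 from max_eq_left (le_min (by linarith) (by linarith)),
      show max (M1:ℝ) N2 = M1 from max_eq_left (le_of_lt c2),
      show max (M2:ℝ) N1 = M2 from max_eq_left (by linarith),
      show min (M1:ℝ) N2 = N2 from min_eq_right (le_of_lt c2),
      show min (M1:ℝ) N1 = N1 from min_eq_right (by linarith),
      show min ((M1:ℝ)+M2) ((N1:ℝ)+N2) = (N1:ℝ)+N2 from min_eq_right (by linarith)]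
  set m1 := min ((M2:ℝ)-N1) (N2:ℝ) with hm1
  set m2 := min ((M1:ℝ)-N2) (N1:ℝ) with hm2
  have hm1a : m1 ≤ (M2:ℝ)-N1 := min_le_left _ _
  have hm1b : m1 ≤ (N2:ℝ) := min_le_right _ _
  have hm1c : 0 ≤ m1 := le_min (by linarith) (by linarith)
  have hm2a : m2 ≤ (M1:ℝ)-N2 := min_le_left _ _
  have hm2c : 0 ≤ m2 := le_min (by linarith) (by linarith)
  set B : ℝ := 0 + (N2:ℝ) - N1 + β12 * 0 + β21 * m2 with hB
  set C : ℝ := 0 + β12 * m1 with hC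
  have hBpos : 0 ≤ B := by nlinarith
  have hCpos : 0 ≤ C := by nlinarith
  have hCle : C ≤ m1 := by nlinarith
  have hBle : B ≤ (N2:ℝ) - N1 + m2 := by nlinarith
  have hA : min B C ≤ min (min (M1:ℝ) (M2:ℝ)) ((N1:ℝ)+N2) - N1 := by
    rcases le_total ((N1:ℝ)+N2) (min (M1:ℝ) (M2:ℝ)) with h | h
    · rw [min_eq_right h]
      calc min B C ≤ C := min_le_right _ _
        _ ≤ m1 := hCle
        _ ≤ _ := by linarith
    · rw [min_eq_left h]
      rcases le_total (M1:ℝ) (M2:ℝ) with h' | h'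
      · rw [min_eq_left h']
        calc min B C ≤ B := min_le_left _ _
          _ ≤ _ := by linarith
      · rw [min_eq_right h']
        calc min B C ≤ C := min_le_right _ _
          _ ≤ m1 := hCle
          _ ≤ _ := by linarith
  rw [min_eq_right hA, max_eq_left (le_min_iff.mpr ⟨hBpos, hCpos⟩ : (0:ℝ) ≤ min B C), min_comm]
  congr 1
  · rw [hC]; ring
  · rw [hB]; ring
end
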